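/- Suppose n ≡ 0 or 1 mod 3 and ν_{n-3} = ν_n - 1. If for every 3-element subset T ⊂ [n] the group ˜H_{ν_{n-3}}(M_{[n]∖T};Z) is an elementary abelian 3-group (or trivial), and the wedge map φ from the direct sum over a ∈ {1,2}, i ∈ [n]∖{1,2} of ˜H_{ν_n - 1}(M_{[n]∖{1,2,i}}) to ˜H_{ν_n}(M_n) (sending z̄ ↦ class of (ai - 12) ∧ z) is surjective, then ˜H_{ν_n}(M_n;Z) has exponent dividing 3, i.e., 3x = 0 for all x ∈ ˜H_{ν_n}(M_n;Z). -/

import Mathlib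

/-!
STATEMENT 16: Suppose n ≡ 0 or 1 mod 3 and ν_{n-3} = ν_n - 1 (ν_n = ⌊(n+1)/3⌋-1).
If for every 3-element subset T ⊆ [n] the group ˜H_{ν_{n-3}}(M_{[n]∖T};ℤ) is an
elementary abelian 3-group (or trivial) — i.e. every cycle of that degree becomes
a boundary after multiplication by 3 — and the wedge map φ (sending a class z̄ of
˜H_{ν_n-1}(M_{[n]∖{1,2,i}}), for a ∈ {1,2} and i ∈ [n]∖{1,2}, to the class of
(ai - 12) ∧ z in ˜H_{ν_n}(M_n)) is surjective, then 3x = 0 for every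
x ∈ ˜H_{ν_n}(M_n;ℤ), i.e. 3·z is a boundary for every ν_n-cycle z.

Chains are modelled on the oriented simplicial chain complex of matching
complexes: vertices are pairs (a,b), a < b (the edge {a,b}); basis elements are
strictly sorted lists of pairwise disjoint edges; ∧ re-sorts concatenations with
the sign of the sorting permutation.
-/

abbrev Vtx : Type := ℕ × ℕ

abbrev Ch : Type := List Vtx →₀ ℤ

def vlt (p q : Vtx) : Prop := p.1 < q.1 ∨ (p.1 = q.1 ∧ p.2 < q.2)

instance : DecidableRel vlt := fun p q => by unfold vlt; infer_instance

def vle (p q : Vtx) : Prop := p = q ∨ vlt p q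

instance : DecidableRel vle := fun p q => by unfold vle; infer_instance

def inversions (l l' : List Vtx) : ℕ :=
  (l.map fun x => l'.countP fun y => decide (vlt y x)).sum

noncomputable def wedge (c d : Ch) : Ch :=
  c.sum fun l m => d.sum fun l' m' =>
    Finsupp.single (List.insertionSort vle (l ++ l')) ((-1 : ℤ) ^ (inversions l l') * m * m')

noncomputable def bd (c : Ch) : Ch :=
  c.sum fun l m => (Finset.range l.length).sum fun i =>
    Finsupp.single (l.eraseIdx i) (m * (-1 : ℤ) ^ i)

/-- faces of the matching complex on vertex set A -/
def IsFaceM (A : Finset ℕ) (l : List Vtx) : Prop :=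
  l.Pairwise vlt ∧ (∀ p ∈ l, p.1 < p.2 ∧ p.1 ∈ A ∧ p.2 ∈ A) ∧
    l.Pairwise fun p q => p.1 ≠ q.1 ∧ p.1 ≠ q.2 ∧ p.2 ≠ q.1 ∧ p.2 ≠ q.2

def IsCycle (A : Finset ℕ) (t : ℕ) (z : Ch) : Prop :=
  (∀ l ∈ z.support, IsFaceM A l ∧ l.length = t + 1) ∧ bd z = 0

def IsBdry (A : Finset ℕ) (t : ℕ) (c : Ch) : Prop :=
  ∃ w : Ch, (∀ l ∈ w.support, IsFaceM A l ∧ l.length = t + 2) ∧ bd w = c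

/-- ν_n = ⌊(n+1)/3⌋ - 1 (as a natural number; nonnegative for n ≥ 2) -/
def nuN (n : ℕ) : ℕ := (n + 1) / 3 - 1

/-!
By surjectivity of `φ`, `Z` is homologous to `∑ⱼ (aⱼiⱼ - 12) ∧ zⱼ`, so it suffices to show that
`3 • (p - q) ∧ z` is a boundary whenever `z` is a cycle of `M_A`, `A = [n] ∖ {1, 2, i}`, and
`p, q ∈ {ai, 12}`. By hypothesis `3 • z = ∂w` in `M_A`. Both `p` and `q` precede every vertex
of `M_A` and are disjoint from `A`, so `p ∧ -` is the cone `p * -` and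
`∂(p * w) = w - p * ∂w`; hence `∂(q * w - p * w) = (p - q) ∧ ∂w = 3 • (p - q) ∧ z`.
-/

open Finset

lemma bd_add (c d : Ch) : bd (c + d) = bd c + bd d := by
  unfold bd
  apply Finsupp.sum_add_index'
  · intro l; simp
  · intro l m₁ m₂
    rw [← sum_add_distrib]
    refine sum_congr rfl fun i _ => ?_
    rw [← Finsupp.single_add, add_mul]

noncomputable def bdLin : Ch →ₗ[ℤ] Ch := (AddMonoidHom.mk' bd bd_add).toIntLinearMap

@[simp]
lemma bdLin_apply (c : Ch) : bdLin c = bd c := rfl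

lemma bd_single (l : List Vtx) (m : ℤ) :
    bd (Finsupp.single l m) =
      ∑ i ∈ range l.length, Finsupp.single (l.eraseIdx i) (m * (-1 : ℤ) ^ i) := by
  unfold bd
  rw [Finsupp.sum_single_index]
  simp

/-- `d` counts the vertices of a face, so these are the `(d - 1)`-chains of `M_A`. -/
noncomputable def chainsOn (A : Finset ℕ) (d : ℕ) : Submodule ℤ Ch :=
  Finsupp.supported ℤ ℤ {l | IsFaceM A l ∧ l.length = d}

lemma mem_chainsOn {A : Finset ℕ} {d : ℕ} {c : Ch} :
    c ∈ chainsOn A d ↔ ∀ l ∈ c.support, IsFaceM A l ∧ l.length = d :=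
  Finsupp.mem_supported' ℤ c |>.trans <| by simp [not_imp_comm]

noncomputable def boundaries (A : Finset ℕ) (t : ℕ) : Submodule ℤ Ch :=
  (chainsOn A (t + 2)).map bdLin

lemma isBdry_iff_mem_boundaries {A : Finset ℕ} {t : ℕ} {c : Ch} :
    IsBdry A t c ↔ c ∈ boundaries A t := by
  simp only [IsBdry, boundaries, Submodule.mem_map, mem_chainsOn, bdLin_apply]

noncomputable def cone (p : Vtx) : Ch →ₗ[ℤ] Ch := Finsupp.lmapDomain ℤ ℤ (p :: ·)

lemma bd_cone (p : Vtx) (w : Ch) : bd (cone p w) = w - cone p (bd w) := by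
  induction w using Finsupp.induction_linear with
  | zero => simp [← bdLin_apply]
  | add f g hf hg =>
    rw [map_add, bd_add, hf, hg, bd_add, map_add]; abel
  | single l m =>
    simp only [cone, Finsupp.lmapDomain_apply, Finsupp.mapDomain_single, bd_single,
      List.length_cons, sum_range_succ', List.eraseIdx_cons_succ, List.eraseIdx_cons_zero,
      pow_succ, pow_zero, mul_one, map_sum]
    have hneg : ∀ k : ℕ, Finsupp.single (p :: l.eraseIdx k) (m * ((-1 : ℤ) ^ k * -1))
        = -Finsupp.single (p :: l.eraseIdx k) (m * (-1 : ℤ) ^ k) := fun k => by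
      rw [← Finsupp.single_neg]; ring_nf
    simp only [hneg, sum_neg_distrib]
    abel

structure IsConeApex (A B : Finset ℕ) (p : Vtx) : Prop where
  subset : A ⊆ B
  fst_lt_snd : p.1 < p.2
  fst_mem : p.1 ∈ B
  snd_mem : p.2 ∈ B
  fst_lt : ∀ x ∈ A, p.1 < x
  snd_notMem : p.2 ∉ A

lemma IsFaceM.cons {A B : Finset ℕ} {p : Vtx} {l : List Vtx} (hp : IsConeApex A B p)
    (hl : IsFaceM A l) : IsFaceM B (p :: l) := by
  obtain ⟨hsorted, hmem, hdisj⟩ := hl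
  refine ⟨List.pairwise_cons.2 ⟨fun q hq => Or.inl (hp.fst_lt _ (hmem q hq).2.1), hsorted⟩,
    ?_, List.pairwise_cons.2 ⟨fun q hq => ?_, hdisj⟩⟩
  · intro q hq
    rcases List.mem_cons.1 hq with rfl | hq
    · exact ⟨hp.fst_lt_snd, hp.fst_mem, hp.snd_mem⟩
    · obtain ⟨hlt, h1, h2⟩ := hmem q hq
      exact ⟨hlt, hp.subset h1, hp.subset h2⟩
  · obtain ⟨-, h1, h2⟩ := hmem q hq
    have hlt1 := hp.fst_lt _ h1
    have hlt2 := hp.fst_lt _ h2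
    exact ⟨by omega, by omega, fun h => hp.snd_notMem (h ▸ h1),
      fun h => hp.snd_notMem (h ▸ h2)⟩

lemma cone_mem_chainsOn {A B : Finset ℕ} {p : Vtx} {d : ℕ} {c : Ch} (hp : IsConeApex A B p)
    (hc : c ∈ chainsOn A d) : cone p c ∈ chainsOn B (d + 1) := by
  refine Finsupp.supported_comap_lmapDomain ℤ ℤ _ _ (Finsupp.supported_mono ?_ hc)
  rintro l ⟨hl, hlen⟩
  exact ⟨hl.cons hp, by simp [hlen]⟩

lemma wedge_single_eq_cone {p : Vtx} {z : Ch} (hz : ∀ l ∈ z.support, (p :: l).Pairwise vlt) :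
    wedge (Finsupp.single [p] 1) z = cone p z := by
  unfold wedge
  rw [Finsupp.sum_single_index (by simp)]
  refine Finsupp.sum_congr fun l hl => ?_
  obtain ⟨hp, hsorted⟩ := List.pairwise_cons.1 (hz l hl)
  have hinv : inversions [p] l = 0 := by
    simp only [inversions, List.map_cons, List.map_nil, List.sum_cons, List.sum_nil, add_zero,
      List.countP_eq_zero, decide_eq_true_eq]
    intro q hq
    have := hp q hq
    unfold vlt at *
    omega
  have hsort : List.insertionSort vle ([p] ++ l) = p :: l :=
    List.Pairwise.insertionSort_eq <|
      List.pairwise_cons.2 ⟨fun q hq => Or.inr (hp q hq), hsorted.imp Or.inr⟩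
  rw [hinv, hsort]
  simp

lemma wedge_sub_left (c c' d : Ch) : wedge (c - c') d = wedge c d - wedge c' d := by
  unfold wedge
  apply Finsupp.sum_sub_index
  intro l m₁ m₂
  rw [← Finsupp.sum_sub]
  refine Finsupp.sum_congr fun l' _ => ?_
  rw [← Finsupp.single_sub]
  ring_nf

lemma wedge_sub_eq_cone_sub_cone {A B : Finset ℕ} {p q : Vtx} {d : ℕ} {z : Ch}
    (hp : IsConeApex A B p) (hq : IsConeApex A B q) (hz : z ∈ chainsOn A d) :
    wedge (Finsupp.single [p] 1 - Finsupp.single [q] 1) z = cone p z - cone q z := by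
  rw [mem_chainsOn] at hz
  rw [wedge_sub_left, wedge_single_eq_cone fun l hl => ((hz l hl).1.cons hp).1,
    wedge_single_eq_cone fun l hl => ((hz l hl).1.cons hq).1]

lemma cone_sub_cone_mem_boundaries {A B : Finset ℕ} {p q : Vtx} {t : ℕ} {c : Ch}
    (hp : IsConeApex A B p) (hq : IsConeApex A B q) (hc : c ∈ boundaries A t) :
    cone p c - cone q c ∈ boundaries B (t + 1) := by
  obtain ⟨w, hw, rfl⟩ := Submodule.mem_map.1 hc
  refine Submodule.mem_map.2 ⟨cone q w - cone p w,
    sub_mem (cone_mem_chainsOn hq hw) (cone_mem_chainsOn hp hw), ?_⟩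
  rw [map_sub]
  simp only [bdLin_apply, bd_cone]
  abel

lemma smul_wedge_mem_boundaries {A B : Finset ℕ} {p q : Vtx} {t : ℕ} {z : Ch} {r : ℤ}
    (hp : IsConeApex A B p) (hq : IsConeApex A B q) (hz : z ∈ chainsOn A (t + 1))
    (hrz : r • z ∈ boundaries A t) :
    r • wedge (Finsupp.single [p] 1 - Finsupp.single [q] 1) z ∈ boundaries B (t + 1) := by
  rw [wedge_sub_eq_cone_sub_cone hp hq hz, smul_sub, ← map_zsmul, ← map_zsmul]
  exact cone_sub_cone_mem_boundaries hp hq hrz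

lemma isConeApex_Icc_sdiff {n a b i : ℕ} (ha : 1 ≤ a) (ha2 : a ≤ 2) (hab : a < b)
    (hb : b ∈ ({1, 2, i} : Finset ℕ)) (hbn : b ≤ n) :
    IsConeApex (Icc 1 n \ {1, 2, i}) (Icc 1 n) (a, b) where
  subset := sdiff_subset
  fst_lt_snd := hab
  fst_mem := mem_Icc.2 ⟨ha, by omega⟩
  snd_mem := mem_Icc.2 ⟨by omega, hbn⟩
  fst_lt x hx := by
    simp only [mem_sdiff, mem_Icc, mem_insert, mem_singleton] at hx
    show a < x
    omega
  snd_notMem hx := (mem_sdiff.1 hx).2 hb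

theorem exponent_three_induction_step_general (n : ℕ)
    (hnu : nuN (n - 3) + 1 = nuN n)
    -- every ˜H_{ν_{n-3}}(M_{[n]∖T}) is an elementary 3-group (or trivial)
    (hElem : ∀ T : Finset ℕ, T ⊆ Finset.Icc 1 n → T.card = 3 →
      ∀ z : Ch, IsCycle (Finset.Icc 1 n \ T) (nuN (n - 3)) z →
        IsBdry (Finset.Icc 1 n \ T) (nuN (n - 3)) ((3 : ℤ) • z))
    -- the wedge map φ is surjective
    (hSurj : ∀ Z : Ch, IsCycle (Finset.Icc 1 n) (nuN n) Z →
      ∃ (k : ℕ) (a i : Fin k → ℕ) (z : Fin k → Ch),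
        (∀ j, a j ∈ ({1, 2} : Finset ℕ) ∧ i j ∈ Finset.Icc 3 n ∧
          IsCycle (Finset.Icc 1 n \ {1, 2, i j}) (nuN n - 1) (z j)) ∧
        IsBdry (Finset.Icc 1 n) (nuN n)
          (Z - ∑ j, wedge (Finsupp.single [(a j, i j)] 1 - Finsupp.single [(1, 2)] 1) (z j))) :
    ∀ Z : Ch, IsCycle (Finset.Icc 1 n) (nuN n) Z →
      IsBdry (Finset.Icc 1 n) (nuN n) ((3 : ℤ) • Z) := by
  intro Z hZ
  obtain ⟨k, a, i, z, hz, hZφ⟩ := hSurj Z hZ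
  have hφ : ∀ j, (3 : ℤ) • wedge (Finsupp.single [(a j, i j)] 1 - Finsupp.single [(1, 2)] 1)
      (z j) ∈ boundaries (Icc 1 n) (nuN n) := fun j => by
    obtain ⟨ha, hi, hzj⟩ := hz j
    simp only [mem_insert, mem_singleton, mem_Icc] at ha hi
    rw [← hnu, Nat.add_sub_cancel] at hzj
    have hT : ({1, 2, i j} : Finset ℕ) ⊆ Icc 1 n := by
      intro x hx
      simp only [mem_insert, mem_singleton, mem_Icc] at hx ⊢
      omega
    have hcard : ({1, 2, i j} : Finset ℕ).card = 3 := card_eq_three.2 ⟨1, 2, i j, by omega,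
      by omega, by omega, rfl⟩
    have h3z := isBdry_iff_mem_boundaries.1 (hElem _ hT hcard (z j) hzj)
    have hp := isConeApex_Icc_sdiff (n := n) (i := i j) (a := a j) (b := i j) (by omega)
      (by omega) (by omega) (by simp) hi.2
    have hq := isConeApex_Icc_sdiff (n := n) (i := i j) (a := 1) (b := 2) le_rfl one_le_two
      one_lt_two (by simp) (by omega)
    rw [← hnu]
    exact smul_wedge_mem_boundaries hp hq (mem_chainsOn.2 hzj.1) h3z
  rw [isBdry_iff_mem_boundaries] at hZφ ⊢
  have h3Z := add_mem (Submodule.smul_mem _ (3 : ℤ) hZφ) (sum_mem (t := univ) fun j _ => hφ j)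
  rwa [smul_sub, ← smul_sum, sub_add_cancel] at h3Z

theorem exponent_three_induction_step (n : ℕ) (h3 : n % 3 = 0 ∨ n % 3 = 1)
    (hnu : nuN (n - 3) + 1 = nuN n)
    -- every ˜H_{ν_{n-3}}(M_{[n]∖T}) is an elementary 3-group (or trivial)
    (hElem : ∀ T : Finset ℕ, T ⊆ Finset.Icc 1 n → T.card = 3 →
      ∀ z : Ch, IsCycle (Finset.Icc 1 n \ T) (nuN (n - 3)) z →
        IsBdry (Finset.Icc 1 n \ T) (nuN (n - 3)) ((3 : ℤ) • z))
    -- the wedge map φ is surjective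
    (hSurj : ∀ Z : Ch, IsCycle (Finset.Icc 1 n) (nuN n) Z →
      ∃ (k : ℕ) (a i : Fin k → ℕ) (z : Fin k → Ch),
        (∀ j, a j ∈ ({1, 2} : Finset ℕ) ∧ i j ∈ Finset.Icc 3 n ∧
          IsCycle (Finset.Icc 1 n \ {1, 2, i j}) (nuN n - 1) (z j)) ∧
        IsBdry (Finset.Icc 1 n) (nuN n)
          (Z - ∑ j, wedge (Finsupp.single [(a j, i j)] 1 - Finsupp.single [(1, 2)] 1) (z j))) :
    ∀ Z : Ch, IsCycle (Finset.Icc 1 n) (nuN n) Z →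
      IsBdry (Finset.Icc 1 n) (nuN n) ((3 : ℤ) • Z) :=
  exponent_three_induction_step_general n hnu hElem hSurj
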